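/- arXiv:2509.05865 — 5 statements merged into one kernel-verified Lean document; each statement's English description precedes it below -/
import Mathlib

section
/- Let f : ℝᵈ → ℝ be twice continuously differentiable, μ-strongly convex and L-smooth on a ball B_ε(w₀), and let f̃ be another differentiable function. Let w̃₀ satisfy ‖w̃₀ − w₀‖ ≤ ε. Define w₁ = w₀ − h∇f(w₀) and w̃₁ = w̃₀ − h∇f̃(w̃₀). If ‖∇f(w̃₀) − ∇f̃(w̃₀)‖ ≤ με and 0 < h ≤ 1/L, then ‖w̃₁ − w₁‖ ≤ ε. -/
/-!
Gradient descent for `f` is the map `T w = w - h • ∇f w`, whose derivative at an interior point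
of the ball is `I - h ∇²f`. The Hessian is symmetric with spectrum in `[μ, L]`, so for
`h ≤ 1/L` this derivative has operator norm at most `1 - hμ`, and the mean value inequality along
the segment from `w₀` gives `‖T w̃₀ - T w₀‖ ≤ (1 - hμ) ε`. Replacing `∇f` by `∇f̃` at `w̃₀` costs at
most `h μ ε`, and `(1 - hμ) ε + h μ ε = ε`.
-/

open scoped RealInnerProductSpace

open Metric Set Filter Topology InnerProductSpace

theorem HasDerivWithinAt.le_of_eventually_mul_sub_le {φ : ℝ → ℝ} {φ' a c : ℝ}
    (hφ : HasDerivWithinAt φ φ' (Ioi a) a) (h : ∀ᶠ t in 𝓝[>] a, c * (t - a) ≤ φ t - φ a) :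
    c ≤ φ' := by
  refine ge_of_tendsto ((hasDerivWithinAt_iff_tendsto_slope' self_notMem_Ioi).1 hφ) ?_
  filter_upwards [h, self_mem_nhdsWithin] with t ht hta
  rw [slope_def_field, le_div_iff₀ (sub_pos.2 hta)]
  linarith

theorem norm_image_sub_center_le_of_norm_hasFDerivAt_le {E F : Type*}
    [NormedAddCommGroup E] [NormedSpace ℝ E] [NormedAddCommGroup F] [NormedSpace ℝ F]
    {T : E → F} {T' : E → E →L[ℝ] F} {a w : E} {r C : ℝ}
    (hT : ContinuousOn T (closedBall a r)) (hT' : ∀ x ∈ ball a r, HasFDerivAt T (T' x) x)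
    (bound : ∀ x ∈ ball a r, ‖T' x‖ ≤ C) (hw : w ∈ closedBall a r) :
    ‖T w - T a‖ ≤ C * ‖w - a‖ := by
  rcases eq_or_ne w a with rfl | hwa
  · simp
  have hwa' : 0 < ‖w - a‖ := norm_pos_iff.2 (sub_ne_zero.2 hwa)
  have hdist : ∀ t ∈ Icc (0 : ℝ) 1, dist (a + t • (w - a)) a = t * ‖w - a‖ := fun t ht => by
    rw [dist_eq_norm, add_sub_cancel_left, norm_smul, Real.norm_of_nonneg ht.1]
  have hball : ∀ t ∈ Ico (0 : ℝ) 1, a + t • (w - a) ∈ ball a r := fun t ht => by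
    rw [mem_ball, hdist t (Ico_subset_Icc_self ht)]
    exact (mul_lt_of_lt_one_left hwa' ht.2).trans_le (mem_closedBall_iff_norm.1 hw)
  have hclosedBall : MapsTo (fun t : ℝ => a + t • (w - a)) (Icc 0 1) (closedBall a r) :=
    fun t ht => by
      rw [mem_closedBall, hdist t ht]
      exact (mul_le_of_le_one_left hwa'.le ht.2).trans (mem_closedBall_iff_norm.1 hw)
  have hline : ∀ t : ℝ, HasDerivAt (fun t : ℝ => a + t • (w - a)) (w - a) t := fun t => by
    simpa using ((hasDerivAt_id t).smul_const (w - a)).const_add a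
  have hsegment := norm_image_sub_le_of_norm_deriv_right_le_segment
    (f := T ∘ fun t => a + t • (w - a)) (f' := fun t => T' (a + t • (w - a)) (w - a))
    (C := C * ‖w - a‖)
    (hT.comp (by fun_prop) hclosedBall)
    (fun t ht => ((hT' _ (hball t ht)).comp_hasDerivAt t (hline t)).hasDerivWithinAt)
    (fun t ht => (T' _).le_of_opNorm_le (bound _ (hball t ht)) _) 1 ⟨zero_le_one, le_rfl⟩
  simpa using hsegment

section InnerProductSpace

variable {E : Type*} [NormedAddCommGroup E] [InnerProductSpace ℝ E]

theorem ContinuousLinearMap.norm_le_of_abs_inner_le {T : E →L[ℝ] E}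
    (hT : (T : E →ₗ[ℝ] E).IsSymmetric) {c : ℝ} (hc : 0 ≤ c)
    (h : ∀ x, |⟪T x, x⟫| ≤ c * ‖x‖ ^ 2) : ‖T‖ ≤ c := by
  rw [T.norm_eq_iSup_rayleighQuotient hT]
  refine ciSup_le fun x => ?_
  rcases eq_or_ne x 0 with rfl | hx
  · simpa using hc
  · rw [rayleighQuotient, reApplyInnerSelf_apply, RCLike.re_to_real, abs_div, abs_sq,
      div_le_iff₀ (by positivity)]
    exact h x

theorem norm_id_sub_smul_le {H : E →L[ℝ] E} (hH : (H : E →ₗ[ℝ] E).IsSymmetric)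
    {μ L h : ℝ} (hμ : ∀ z, μ * ‖z‖ ^ 2 ≤ ⟪H z, z⟫) (hL : ‖H‖ ≤ L) (hμL : μ ≤ L)
    (hh : 0 ≤ h) (hhL : h * L ≤ 1) :
    ‖ContinuousLinearMap.id ℝ E - h • H‖ ≤ 1 - h * μ := by
  have hhμ : h * μ ≤ 1 := (mul_le_mul_of_nonneg_left hμL hh).trans hhL
  refine ContinuousLinearMap.norm_le_of_abs_inner_le ?_ (by linarith) fun z => ?_
  · intro z w
    simpa [inner_sub_left, inner_sub_right, real_inner_smul_left, real_inner_smul_right] using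
      Or.inl (hH z w)
  · have hup : ⟪H z, z⟫ ≤ L * ‖z‖ ^ 2 := calc
      ⟪H z, z⟫ ≤ ‖H z‖ * ‖z‖ := real_inner_le_norm _ _
      _ ≤ L * ‖z‖ * ‖z‖ := by gcongr; exact H.le_of_opNorm_le hL z
      _ = L * ‖z‖ ^ 2 := by ring
    have hlow := hμ z
    have hz := sq_nonneg ‖z‖
    simp only [sub_apply, ContinuousLinearMap.id_apply, smul_apply, inner_sub_left,
      real_inner_smul_left, real_inner_self_eq_norm_sq]
    -- the quadratic form of `I - h • H` lies between `(1 - h L) ‖z‖² ≥ 0` and `(1 - h μ) ‖z‖²`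
    rw [abs_le]
    constructor <;> nlinarith

theorem HasFDerivAt.mul_norm_sq_le_inner_apply_self {g : E → E} {H : E →L[ℝ] E} {x : E} {μ : ℝ}
    (hg : HasFDerivAt g H x) (hmono : ∀ᶠ y in 𝓝 x, μ * ‖y - x‖ ^ 2 ≤ ⟪g y - g x, y - x⟫)
    (z : E) : μ * ‖z‖ ^ 2 ≤ ⟪H z, z⟫ := by
  have hline : HasDerivAt (fun t : ℝ => x + t • z) z 0 := by
    simpa using ((hasDerivAt_id (0 : ℝ)).smul_const z).const_add x
  have hψ : HasDerivAt (fun t : ℝ => ⟪g (x + t • z), z⟫) ⟪H z, z⟫ 0 :=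
    ((hg.comp_hasDerivAt_of_eq 0 hline (by simp)).inner ℝ (hasDerivAt_const _ z)).congr_deriv
      (by simp)
  refine hψ.hasDerivWithinAt.le_of_eventually_mul_sub_le ?_
  have hto : Tendsto (fun t : ℝ => x + t • z) (𝓝[>] 0) (𝓝 x) := by
    simpa using hline.continuousAt.tendsto.mono_left nhdsWithin_le_nhds
  filter_upwards [hto.eventually hmono, self_mem_nhdsWithin] with t ht (htpos : 0 < t)
  rw [add_sub_cancel_left, norm_smul, Real.norm_of_nonneg htpos.le,
    real_inner_smul_right] at ht
  rw [sub_zero, zero_smul, add_zero, ← inner_sub_left]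
  nlinarith

end InnerProductSpace

section Gradient

variable {E : Type*} [NormedAddCommGroup E] [InnerProductSpace ℝ E] [CompleteSpace E]
  {f : E → ℝ} {g : E → E} {x : E}

theorem HasFDerivAt.isSymmetric_of_hasGradientAt {H : E →L[ℝ] E}
    (hf : ∀ᶠ y in 𝓝 x, HasGradientAt f (g y) y) (hg : HasFDerivAt g H x) :
    (H : E →ₗ[ℝ] E).IsSymmetric := by
  intro z w
  have hf' : ∀ᶠ y in 𝓝 x, HasFDerivAt f (toDual ℝ E (g y)) y := by
    filter_upwards [hf] with y hy using hy.hasFDerivAt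
  have hg' := ((toDual ℝ E).toContinuousLinearEquiv.toContinuousLinearMap.hasFDerivAt).comp x hg
  have := second_derivative_symmetric_of_eventually hf' hg' z w
  simp only [ContinuousLinearMap.comp_apply] at this
  simpa [real_inner_comm] using this

theorem ContDiffAt.differentiableAt_of_hasGradientAt (hf : ContDiffAt ℝ 2 f x)
    (hg : ∀ᶠ y in 𝓝 x, HasGradientAt f (g y) y) : DifferentiableAt ℝ g x := by
  have hgrad : DifferentiableAt ℝ (gradient f) x :=
    (toDual ℝ E).symm.toContinuousLinearEquiv.differentiableAt.comp x
      ((hf.fderiv_right (m := 1) le_rfl).differentiableAt one_ne_zero)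
  refine hgrad.congr_of_eventuallyEq ?_
  filter_upwards [hg] with y hy using hy.gradient.symm

theorem ContDiffOn.continuousOn_of_hasGradientAt {s : Set E} {n : WithTop ℕ∞}
    (hf : ContDiffOn ℝ n f s) (hn : 1 ≤ n) (hs : UniqueDiffOn ℝ s)
    (hg : ∀ y ∈ s, HasGradientAt f (g y) y) : ContinuousOn g s := by
  refine ((toDual ℝ E).symm.continuous.comp_continuousOn
    (hf.continuousOn_fderivWithin hs hn)).congr fun y hy => ?_
  simp [(hg y hy).hasFDerivAt.hasFDerivWithinAt.fderivWithin (hs y hy)]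

theorem norm_gradient_step_sub_le {w₀ w : E} {ε μ L h : ℝ} (hε : 0 < ε)
    (hC2 : ContDiffOn ℝ 2 f (closedBall w₀ ε))
    (hgrad : ∀ x ∈ closedBall w₀ ε, HasGradientAt f (g x) x)
    (hsc : ∀ x ∈ closedBall w₀ ε, ∀ y ∈ closedBall w₀ ε, μ * ‖x - y‖ ^ 2 ≤ ⟪g x - g y, x - y⟫)
    (hsm : ∀ x ∈ closedBall w₀ ε, ∀ y ∈ closedBall w₀ ε, ‖g x - g y‖ ≤ L * ‖x - y‖)
    (hμL : μ ≤ L) (hL : 0 ≤ L) (hh : 0 ≤ h) (hhL : h * L ≤ 1) (hw : w ∈ closedBall w₀ ε) :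
    ‖(w - h • g w) - (w₀ - h • g w₀)‖ ≤ (1 - h * μ) * ‖w - w₀‖ := by
  have hnhds : ∀ x ∈ ball w₀ ε, closedBall w₀ ε ∈ 𝓝 x := fun x hx =>
    mem_of_superset (isOpen_ball.mem_nhds hx) ball_subset_closedBall
  have hderiv : ∀ x ∈ ball w₀ ε, HasFDerivAt g (fderiv ℝ g x) x := fun x hx =>
    ((hC2.contDiffAt (hnhds x hx)).differentiableAt_of_hasGradientAt
      (eventually_of_mem (hnhds x hx) hgrad)).hasFDerivAt
  have hbound : ∀ x ∈ ball w₀ ε,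
      ‖ContinuousLinearMap.id ℝ E - h • fderiv ℝ g x‖ ≤ 1 - h * μ := fun x hx => by
    have hxB := ball_subset_closedBall hx
    exact norm_id_sub_smul_le
      ((hderiv x hx).isSymmetric_of_hasGradientAt (eventually_of_mem (hnhds x hx) hgrad))
      ((hderiv x hx).mul_norm_sq_le_inner_apply_self
        (eventually_of_mem (hnhds x hx) fun y hy => hsc y hy x hxB))
      ((hderiv x hx).le_of_lip' hL (eventually_of_mem (hnhds x hx) fun y hy => hsm y hy x hxB))
      hμL hh hhL
  have hunique : UniqueDiffOn ℝ (closedBall w₀ ε) :=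
    uniqueDiffOn_convex (convex_closedBall w₀ ε) (by simp [interior_closedBall w₀ hε.ne', hε])
  have hcont : ContinuousOn (fun w => w - h • g w) (closedBall w₀ ε) :=
    continuousOn_id.sub ((hC2.continuousOn_of_hasGradientAt one_le_two hunique hgrad).const_smul h)
  exact norm_image_sub_center_le_of_norm_hasFDerivAt_le hcont
    (fun x hx => (hasFDerivAt_id x).sub ((hderiv x hx).const_smul h)) hbound hw

end Gradient

theorem stmt4_general {d : ℕ} (f : EuclideanSpace ℝ (Fin d) → ℝ)
    (g g' : EuclideanSpace ℝ (Fin d) → EuclideanSpace ℝ (Fin d))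
    (w₀ w₀' : EuclideanSpace ℝ (Fin d)) (μ L ε h : ℝ)
    (hε : 0 < ε) (hμL : μ ≤ L)
    (hC2 : ContDiffOn ℝ 2 f (Metric.closedBall w₀ ε))
    (hgrad : ∀ x ∈ Metric.closedBall w₀ ε, HasGradientAt f (g x) x)
    (hsc : ∀ x ∈ Metric.closedBall w₀ ε, ∀ y ∈ Metric.closedBall w₀ ε,
      μ * ‖x - y‖ ^ 2 ≤ ⟪g x - g y, x - y⟫)
    (hsm : ∀ x ∈ Metric.closedBall w₀ ε, ∀ y ∈ Metric.closedBall w₀ ε,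
      ‖g x - g y‖ ≤ L * ‖x - y‖)
    (hd : ‖w₀' - w₀‖ ≤ ε)
    (hgap : ‖g w₀' - g' w₀'‖ ≤ μ * ε)
    (hh0 : 0 < h) (hh : h ≤ 1 / L) :
    ‖(w₀' - h • g' w₀') - (w₀ - h • g w₀)‖ ≤ ε := by
  have hL : 0 < L := one_div_pos.1 (hh0.trans_le hh)
  have hhL : h * L ≤ 1 := (le_div_iff₀ hL).1 (by simpa using hh)
  have hhμ : h * μ ≤ 1 := (mul_le_mul_of_nonneg_left hμL hh0.le).trans hhL
  have hw₀' : w₀' ∈ Metric.closedBall w₀ ε := mem_closedBall_iff_norm.2 hd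
  have hstep := norm_gradient_step_sub_le hε hC2 hgrad hsc hsm hμL hL.le hh0.le hhL hw₀'
  have hsubst : ‖h • (g w₀' - g' w₀')‖ ≤ h * (μ * ε) := by
    rw [norm_smul, Real.norm_of_nonneg hh0.le]
    exact mul_le_mul_of_nonneg_left hgap hh0.le
  calc ‖(w₀' - h • g' w₀') - (w₀ - h • g w₀)‖
      = ‖((w₀' - h • g w₀') - (w₀ - h • g w₀)) + h • (g w₀' - g' w₀')‖ := by
        congr 1; simp only [smul_sub]; abel
    _ ≤ (1 - h * μ) * ‖w₀' - w₀‖ + h * (μ * ε) := (norm_add_le _ _).trans (add_le_add hstep hsubst)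
    _ ≤ (1 - h * μ) * ε + h * (μ * ε) := by gcongr
    _ = ε := by ring

/-- One-step stability under gradient substitution: if `f` is C², `μ`-strongly convex and
`L`-smooth on the ball of radius `ε` around `w₀` (with gradient `g`), `f'` is another
function with gradient `g'` at `w₀'`, `‖w₀' - w₀‖ ≤ ε`, `‖g w₀' - g' w₀'‖ ≤ μ·ε`, and
`0 < h ≤ 1/L`, then `‖(w₀' - h·g' w₀') - (w₀ - h·g w₀)‖ ≤ ε`. -/
theorem stmt4 {d : ℕ} (f f' : EuclideanSpace ℝ (Fin d) → ℝ)
    (g g' : EuclideanSpace ℝ (Fin d) → EuclideanSpace ℝ (Fin d))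
    (w₀ w₀' : EuclideanSpace ℝ (Fin d)) (μ L ε h : ℝ)
    (hε : 0 < ε) (hμ : 0 < μ) (hμL : μ ≤ L)
    (hC2 : ContDiffOn ℝ 2 f (Metric.closedBall w₀ ε))
    (hgrad : ∀ x ∈ Metric.closedBall w₀ ε, HasGradientAt f (g x) x)
    (hgrad' : HasGradientAt f' (g' w₀') w₀')
    (hsc : ∀ x ∈ Metric.closedBall w₀ ε, ∀ y ∈ Metric.closedBall w₀ ε,
      μ * ‖x - y‖ ^ 2 ≤ ⟪g x - g y, x - y⟫)
    (hsm : ∀ x ∈ Metric.closedBall w₀ ε, ∀ y ∈ Metric.closedBall w₀ ε,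
      ‖g x - g y‖ ≤ L * ‖x - y‖)
    (hd : ‖w₀' - w₀‖ ≤ ε)
    (hgap : ‖g w₀' - g' w₀'‖ ≤ μ * ε)
    (hh0 : 0 < h) (hh : h ≤ 1 / L) :
    ‖(w₀' - h • g' w₀') - (w₀ - h • g w₀)‖ ≤ ε :=
  stmt4_general f g g' w₀ w₀' μ L ε h hε hμL hC2 hgrad hsc hsm hd hgap hh0 hh
end

section
/- Consider linear regression loss f(w; (x, y)) = (1/2)(xᵀw − y)² on ℝᵈ × ℝ with fixed w ∈ ℝᵈ. Fix (x, y) with ∇_w f(w; (x, y)) ≠ 0. Then the exact-forging set S₀ = {(z, t) ∈ ℝᵈ × ℝ : (zᵀw − t)z = (xᵀw − y)x} has Lebesgue measure zero in ℝᵈ × ℝ. -/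
open scoped RealInnerProductSpace
open MeasureTheory

/-- For linear regression with loss `f(w;(x,y)) = ½(xᵀw - y)²` and a fixed reference point
`(x, y)` with nonzero gradient `(xᵀw - y)x`, the exact-forging set
`S₀ = {(z,t) : (zᵀw - t)z = (xᵀw - y)x}` has Lebesgue measure zero in `ℝᵈ × ℝ`. -/
theorem stmt5 {d : ℕ} (w x : EuclideanSpace ℝ (Fin d)) (y : ℝ)
    (hgrad : (⟪x, w⟫ - y) • x ≠ 0) :
    volume {p : EuclideanSpace ℝ (Fin d) × ℝ |
      (⟪p.1, w⟫ - p.2) • p.1 = (⟪x, w⟫ - y) • x} = 0 := by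
  have hcont : Continuous (fun p : EuclideanSpace ℝ (Fin d) × ℝ =>
      (⟪p.1, w⟫ - p.2) • p.1) := ((continuous_fst.inner continuous_const).sub continuous_snd).smul continuous_fst
  have hmeas : MeasurableSet {p : EuclideanSpace ℝ (Fin d) × ℝ |
      (⟪p.1, w⟫ - p.2) • p.1 = (⟪x, w⟫ - y) • x} :=
    (isClosed_eq hcont continuous_const).measurableSet
  rw [Measure.volume_eq_prod, Measure.measure_prod_null hmeas]
  filter_upwards with z
  refine Set.Subsingleton.measure_zero ?_ _
  intro t1 h1 t2 h2
  simp only [Set.mem_preimage, Set.mem_setOf_eq] at h1 h2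
  by_cases hz : z = 0
  · exact absurd (h1.symm.trans (by simp [hz])) hgrad
  · have := h1.trans h2.symm
    have h4 : ((⟪z, w⟫ - t1) - (⟪z, w⟫ - t2)) • z = 0 := by
      rw [sub_smul, this, sub_self]
    rcases smul_eq_zero.mp h4 with h | h
    · linarith [sub_eq_zero.mp h]
    · exact absurd h hz
end

section
/- For a point (z, t) in the exact-forging set of linear regression, i.e., satisfying (zᵀw − t)z = (xᵀw − y)x with A := xᵀw − y ≠ 0, x ≠ 0, the vector z must be parallel to x: there exists a scalar α ≠ 0 with z = αx, and α satisfies the quadratic equation A = α²c − αt where c = xᵀw. -/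
open scoped RealInnerProductSpace

/-- For an exact-forging point `(z, t)` of linear regression, i.e., satisfying
`(zᵀw - t)z = (xᵀw - y)x` with `A := xᵀw - y ≠ 0` and `x ≠ 0`, the vector `z` is parallel
to `x`: there is a scalar `α ≠ 0` with `z = α·x` and `A = α²c - αt` where `c = xᵀw`. -/
theorem stmt6 {d : ℕ} (w x z : EuclideanSpace ℝ (Fin d)) (y t : ℝ)
    (hA : ⟪x, w⟫ - y ≠ 0) (hx : x ≠ 0)
    (heq : (⟪z, w⟫ - t) • z = (⟪x, w⟫ - y) • x) :
    ∃ α : ℝ, α ≠ 0 ∧ z = α • x ∧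
      ⟪x, w⟫ - y = α ^ 2 * ⟪x, w⟫ - α * t := by
  obtain ⟨c, hc⟩ : ∃ c : ℝ, ⟪x, w⟫ = c := ⟨_, rfl⟩
  obtain ⟨A, hAdef⟩ : ∃ A : ℝ, ⟪x, w⟫ - y = A := ⟨_, rfl⟩
  obtain ⟨B, hBdef⟩ : ∃ B : ℝ, ⟪z, w⟫ - t = B := ⟨_, rfl⟩
  rw [hAdef] at hA
  rw [hAdef, hBdef] at heq
  have hB : B ≠ 0 := by
    intro h
    rw [h, zero_smul] at heq
    rcases (smul_eq_zero.mp heq.symm) with h1 | h2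
    · exact hA h1
    · exact hx h2
  have hα : A / B ≠ 0 := div_ne_zero hA hB
  have hz : z = (A / B) • x := by
    rw [div_eq_inv_mul, ← smul_smul, ← heq, smul_smul, inv_mul_cancel₀ hB, one_smul]
  refine ⟨A / B, hα, hz, ?_⟩
  have hzw : ⟪z, w⟫ = (A / B) * c := by
    rw [hz, real_inner_smul_left, hc]
  have hBval := hBdef
  rw [hzw] at hBval
  have key : B ^ 2 = A * c - B * t := by
    field_simp at hBval
    linarith [hBval]
  rw [hAdef, hc]
  rw [div_pow, div_mul_eq_mul_div, div_mul_eq_mul_div, div_sub_div _ _ (pow_ne_zero 2 hB) hB,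
    eq_div_iff (by positivity : B ^ 2 * B ≠ 0)]
  linear_combination (A * B) * key
end

section
/- Fix a ∈ ℝᵈ with A := ‖a‖ > 0, w ∈ ℝᵈ, and ε > 0. For any nonzero z ∈ ℝᵈ, the set of labels t ∈ ℝ satisfying ‖a − (zᵀw − t)z‖ ≤ ε is an interval (possibly empty) of Lebesgue measure at most 2√(ε² − A²sin²θ)/‖z‖ when A|sin θ| ≤ ε (where θ is the angle between a and z), and is empty when A|sin θ| > ε. -/
open scoped RealInnerProductSpace
open MeasureTheory

/-- Per-point slice estimate: for fixed `a ≠ 0`, `w`, `ε > 0` and nonzero `z`, the set of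
labels `t` with `‖a - (zᵀw - t)z‖ ≤ ε` is a (possibly empty) closed interval whose
Lebesgue measure is at most `2√(ε² - ‖a‖² sin²θ)/‖z‖` when `‖a‖|sin θ| ≤ ε` (with `θ`
the angle between `a` and `z`), and which is empty when `‖a‖|sin θ| > ε`. -/
theorem stmt7 {d : ℕ} (a w z : EuclideanSpace ℝ (Fin d)) (ε : ℝ)
    (hε : 0 < ε) (hA : 0 < ‖a‖) (hz : z ≠ 0) :
    (∃ l u : ℝ, {t : ℝ | ‖a - (⟪z, w⟫ - t) • z‖ ≤ ε} = Set.Icc l u) ∧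
    (‖a‖ * |Real.sin (InnerProductGeometry.angle a z)| ≤ ε →
      volume {t : ℝ | ‖a - (⟪z, w⟫ - t) • z‖ ≤ ε} ≤
        ENNReal.ofReal
          (2 * Real.sqrt (ε ^ 2 - ‖a‖ ^ 2 * Real.sin (InnerProductGeometry.angle a z) ^ 2)
            / ‖z‖)) ∧
    (ε < ‖a‖ * |Real.sin (InnerProductGeometry.angle a z)| →
      {t : ℝ | ‖a - (⟪z, w⟫ - t) • z‖ ≤ ε} = ∅) := by
  have hn : (0:ℝ) < ‖z‖ := norm_pos_iff.mpr hz
  have hn2 : (0:ℝ) < ‖z‖ ^ 2 := by positivity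
  set θ : ℝ := InnerProductGeometry.angle a z with hθ
  set p : ℝ := ⟪a, z⟫ with hp
  set m : ℝ := ⟪z, w⟫ with hm
  set D : ℝ := ε ^ 2 - ‖a‖ ^ 2 * Real.sin θ ^ 2 with hD
  set c : ℝ := p / ‖z‖ ^ 2 with hc
  have hcos : Real.cos θ = p / (‖a‖ * ‖z‖) := InnerProductGeometry.cos_angle a z
  have hsin2 : ‖a‖ ^ 2 * Real.sin θ ^ 2 = ‖a‖ ^ 2 - p ^ 2 / ‖z‖ ^ 2 := by
    have h1 : Real.sin θ ^ 2 = 1 - Real.cos θ ^ 2 := by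
      nlinarith [Real.sin_sq_add_cos_sq θ]
    rw [h1, hcos]
    field_simp
  have key : ∀ s : ℝ, (s - c) ^ 2 * ‖z‖ ^ 2 - D
      = (‖a‖ ^ 2 - 2 * (s * p) + s ^ 2 * ‖z‖ ^ 2) - ε ^ 2 := by
    intro s
    rw [hD, hsin2, hc]
    field_simp
    ring
  have hmem : ∀ t : ℝ, ‖a - (m - t) • z‖ ≤ ε ↔ (m - t - c) ^ 2 ≤ D / ‖z‖ ^ 2 := by
    intro t
    rw [← pow_le_pow_iff_left₀ (norm_nonneg _) hε.le two_ne_zero]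
    have hexp : ‖a - (m - t) • z‖ ^ 2
        = ‖a‖ ^ 2 - 2 * ((m - t) * p) + (m - t) ^ 2 * ‖z‖ ^ 2 := by
      rw [norm_sub_sq_real, real_inner_smul_right, norm_smul, Real.norm_eq_abs,
        mul_pow, sq_abs]
    rw [hexp, le_div_iff₀ hn2]
    have := key (m - t)
    constructor <;> intro h <;> linarith
  rcases le_or_gt 0 D with hDpos | hDneg
  · -- nonnegative discriminant: interval case
    set R : ℝ := Real.sqrt D / ‖z‖ with hR
    have hRpos : 0 ≤ R := by positivity
    have hR2 : R ^ 2 = D / ‖z‖ ^ 2 := by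
      rw [hR, div_pow, Real.sq_sqrt hDpos]
    have hIcc : {t : ℝ | ‖a - (m - t) • z‖ ≤ ε} = Set.Icc (m - c - R) (m - c + R) := by
      ext t
      simp only [Set.mem_setOf_eq, Set.mem_Icc, hmem t]
      constructor
      · intro h
        have h2 := abs_le_of_sq_le_sq' (show (m - t - c) ^ 2 ≤ R ^ 2 by rw [hR2]; exact h)
          hRpos
        exact ⟨by linarith [h2.2], by linarith [h2.1]⟩
      · rintro ⟨h1, h2⟩
        rw [← hR2]
        exact sq_le_sq' (by linarith) (by linarith)
    refine ⟨⟨_, _, hIcc⟩, fun _ => ?_, fun hlt => ?_⟩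
    · rw [hIcc, Real.volume_Icc]
      apply ENNReal.ofReal_le_ofReal
      have : m - c + R - (m - c - R) = 2 * Real.sqrt D / ‖z‖ := by rw [hR]; ring
      rw [this]
    · exfalso
      have hsq : (‖a‖ * |Real.sin θ|) ^ 2 = ‖a‖ ^ 2 * Real.sin θ ^ 2 := by
        rw [mul_pow, sq_abs]
      nlinarith [hlt, hε, abs_nonneg (Real.sin θ), hA]
  · -- negative discriminant: empty set
    have hempty : {t : ℝ | ‖a - (m - t) • z‖ ≤ ε} = ∅ := by
      ext t
      simp only [Set.mem_setOf_eq, Set.mem_empty_iff_false, iff_false]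
      intro h
      have h2 := (hmem t).mp h
      have h3 : D / ‖z‖ ^ 2 < 0 := div_neg_of_neg_of_pos hDneg hn2
      nlinarith [sq_nonneg (m - t - c)]
    refine ⟨⟨1, 0, by rw [hempty, Set.Icc_eq_empty (by norm_num)]⟩, fun _ => ?_,
      fun _ => hempty⟩
    rw [hempty]
    simp
end

section
/- Let d > 1, R > 0, w ∈ ℝᵈ, and fix (x, y) ∈ ℝᵈ × ℝ with ∇_w f(w; (x,y)) ≠ 0 where f(w; (x,y)) = (1/2)(xᵀw − y)². Define S_ε = {(z,t) : ‖∇_w f(w; (x,y)) − ∇_w f(w; (z,t))‖ ≤ ε}. Then the Lebesgue measure of S_ε intersected with the set {(z,t) : ‖z‖ < R} restricted in t per the forging condition satisfies μ(S_ε ∩ B_R) ≤ (2d/(d−1))·(vol(B_R)/R)·ε, where B_R is the open ball of radius R in ℝᵈ and vol(B_R) its d-dimensional volume. -/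
/-!
For fixed `z ≠ 0` and reference gradient `g`, projecting onto `z` (Cauchy–Schwarz) shows that
the labels `t` with `‖g - (⟪z, w⟫ - t) • z‖ ≤ ε` lie in an interval of length `2ε / ‖z‖`.
By Fubini the measure of the forging set over the ball `B_R` is thus at most
`2ε ∫_{B_R} ‖z‖⁻¹ dz`, and in polar coordinates `∫_{B_R} ‖z‖⁻¹ dz = d / ((d - 1) R) · vol(B_R)`,
which is finite because `d > 1`.
-/

open scoped RealInnerProductSpace
open MeasureTheory Metric Set Module

section ForgingSet

variable {E : Type*} [NormedAddCommGroup E] [InnerProductSpace ℝ E]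

/-- `S_ε`: the labelled points `(z, t)` whose squared-loss gradient `(⟪z, w⟫ - t) • z` at `w`
is `ε`-close to the gradient `g`. -/
def forgingSet (g w : E) (ε : ℝ) : Set (E × ℝ) :=
  {p | ‖g - (⟪p.1, w⟫ - p.2) • p.1‖ ≤ ε}

lemma abs_sub_mul_norm_le_norm_sub_smul (g : E) {z : E} (hz : z ≠ 0) (u : ℝ) :
    |⟪g, z⟫ / ‖z‖ ^ 2 - u| * ‖z‖ ≤ ‖g - u • z‖ := by
  set c := ⟪g, z⟫ / ‖z‖ ^ 2 with hc
  have hinner : ⟪g - u • z, z⟫ = (c - u) * (‖z‖ * ‖z‖) := by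
    rw [inner_sub_left, real_inner_smul_left, real_inner_self_eq_norm_mul_norm, hc]
    field_simp
  have key := abs_real_inner_le_norm (g - u • z) z
  rw [hinner, abs_mul, abs_mul_self, ← mul_assoc] at key
  exact le_of_mul_le_mul_right key (norm_pos_iff.2 hz)

lemma volume_preimage_mk_forgingSet_le (g w : E) {z : E} (hz : z ≠ 0) (ε : ℝ) :
    volume (Prod.mk z ⁻¹' forgingSet g w ε) ≤ ENNReal.ofReal (2 * ε * ‖z‖⁻¹) := by
  set c := ⟪z, w⟫ - ⟪g, z⟫ / ‖z‖ ^ 2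
  calc volume (Prod.mk z ⁻¹' forgingSet g w ε)
      ≤ volume (Icc (c - ε / ‖z‖) (c + ε / ‖z‖)) := by
        refine measure_mono fun t (ht : ‖g - (⟪z, w⟫ - t) • z‖ ≤ ε) => ?_
        have h := (abs_sub_mul_norm_le_norm_sub_smul g hz (⟪z, w⟫ - t)).trans ht
        rw [← le_div_iff₀ (norm_pos_iff.2 hz), abs_le] at h
        constructor <;> linarith [h.1, h.2]
    _ = ENNReal.ofReal (2 * ε * ‖z‖⁻¹) := by
        rw [Real.volume_Icc]
        ring_nf

variable [MeasurableSpace E] [BorelSpace E]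

lemma measurableSet_forgingSet (g w : E) (ε : ℝ) : MeasurableSet (forgingSet g w ε) :=
  measurableSet_le (by fun_prop) measurable_const

lemma prod_forgingSet_inter_le (μ : Measure E) [NullSingletonClass μ] (g w : E) (ε R : ℝ) :
    μ.prod volume (forgingSet g w ε ∩ {p | ‖p.1‖ < R}) ≤
      ENNReal.ofReal (2 * ε) * ∫⁻ z in ball 0 R, ENNReal.ofReal ‖z‖⁻¹ ∂μ := by
  have hsection : ∀ z ≠ 0, volume (Prod.mk z ⁻¹' (forgingSet g w ε ∩ {p | ‖p.1‖ < R})) ≤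
      (ball 0 R).indicator (fun z => ENNReal.ofReal (2 * ε * ‖z‖⁻¹)) z := by
    intro z hz
    by_cases hzR : ‖z‖ < R
    · rw [indicator_of_mem (mem_ball_zero_iff.2 hzR)]
      exact (measure_mono fun t ht => ht.1).trans (volume_preimage_mk_forgingSet_le g w hz ε)
    · simp [hzR]
  calc μ.prod volume (forgingSet g w ε ∩ {p | ‖p.1‖ < R})
      = ∫⁻ z, volume (Prod.mk z ⁻¹' (forgingSet g w ε ∩ {p | ‖p.1‖ < R})) ∂μ :=
        Measure.prod_apply ((measurableSet_forgingSet g w ε).inter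
          (measurableSet_lt (by fun_prop) measurable_const))
    _ ≤ ∫⁻ z, (ball 0 R).indicator (fun z => ENNReal.ofReal (2 * ε * ‖z‖⁻¹)) z ∂μ :=
        lintegral_mono_ae ((μ.ae_ne 0).mono hsection)
    _ = ENNReal.ofReal (2 * ε) * ∫⁻ z in ball 0 R, ENNReal.ofReal ‖z‖⁻¹ ∂μ := by
        simp_rw [lintegral_indicator measurableSet_ball,
          ENNReal.ofReal_mul' (inv_nonneg.2 (norm_nonneg _))]
        exact lintegral_const_mul _ (by fun_prop)

end ForgingSet

section Radial

variable {E : Type*} [NormedAddCommGroup E] [NormedSpace ℝ E] [FiniteDimensional ℝ E]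
  [MeasurableSpace E] [BorelSpace E] (μ : Measure E) [μ.IsAddHaarMeasure]

lemma integrableOn_ball_inv_norm (hE : 1 < finrank ℝ E) (R : ℝ) :
    IntegrableOn (fun x : E => ‖x‖⁻¹) (ball 0 R) μ := by
  obtain ⟨m, hm⟩ : ∃ m, finrank ℝ E = m + 2 := ⟨finrank ℝ E - 2, by omega⟩
  have : Nontrivial E := Module.nontrivial_of_finrank_eq_succ hm
  rw [integrableOn_fun_norm_addHaar μ (f := (·⁻¹)), hm]
  refine ((continuous_pow m).integrableOn_Icc.mono_set Ioo_subset_Icc_self).congr_fun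
    (fun y (hy : y ∈ Ioo 0 R) => ?_) measurableSet_Ioo
  simp [pow_succ, hy.1.ne']

lemma integral_ball_inv_norm (hE : 1 < finrank ℝ E) {R : ℝ} (hR : 0 < R) :
    ∫ x in ball (0 : E) R, ‖x‖⁻¹ ∂μ =
      finrank ℝ E / ((finrank ℝ E - 1) * R) * μ.real (ball 0 R) := by
  obtain ⟨m, hm⟩ : ∃ m, finrank ℝ E = m + 2 := ⟨finrank ℝ E - 2, by omega⟩
  have : Nontrivial E := Module.nontrivial_of_finrank_eq_succ hm
  have hradial : ∫ y in Ioi (0 : ℝ), y ^ (finrank ℝ E - 1) • (Iio R).indicator (·⁻¹) y =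
      R ^ (m + 1) / (m + 1) := by
    calc ∫ y in Ioi (0 : ℝ), y ^ (finrank ℝ E - 1) • (Iio R).indicator (·⁻¹) y
        = ∫ y in Ioi (0 : ℝ), (Iio R).indicator (· ^ m) y := by
          refine setIntegral_congr_fun measurableSet_Ioi fun y (hy : 0 < y) => ?_
          by_cases hyR : y < R
          · simp [hyR, hm, pow_succ, hy.ne']
          · simp [hyR]
      _ = ∫ y in (0 : ℝ)..R, y ^ m := by
          rw [setIntegral_indicator measurableSet_Iio, Ioi_inter_Iio,
            intervalIntegral.integral_of_le hR.le, integral_Ioc_eq_integral_Ioo]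
      _ = R ^ (m + 1) / (m + 1) := by simp [integral_pow]
  calc ∫ x in ball (0 : E) R, ‖x‖⁻¹ ∂μ = ∫ x, (Iio R).indicator (·⁻¹) ‖x‖ ∂μ := by
        rw [← integral_indicator measurableSet_ball]
        congr 1 with x
        by_cases hx : ‖x‖ < R <;> simp [indicator, hx]
    _ = _ := by
        rw [integral_fun_norm_addHaar μ, hradial, measureReal_def μ (ball 0 R),
          μ.addHaar_ball _ hR.le, ENNReal.toReal_mul, ENNReal.toReal_ofReal (by positivity),
          ← measureReal_def, hm]
        push_cast
        field_simp
        ring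

lemma lintegral_ball_inv_norm (hE : 1 < finrank ℝ E) {R : ℝ} (hR : 0 < R) :
    ∫⁻ x in ball (0 : E) R, ENNReal.ofReal ‖x‖⁻¹ ∂μ =
      ENNReal.ofReal (finrank ℝ E / ((finrank ℝ E - 1) * R) * μ.real (ball 0 R)) := by
  rw [← integral_ball_inv_norm μ hE hR, ofReal_integral_eq_lintegral_ofReal
    (integrableOn_ball_inv_norm μ hE R) (.of_forall fun x => inv_nonneg.2 (norm_nonneg x))]

end Radial

theorem stmt8_general {d : ℕ} (hd : 1 < d) (R ε : ℝ) (hR : 0 < R)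
    (w x : EuclideanSpace ℝ (Fin d)) (y : ℝ) :
    volume ({p : EuclideanSpace ℝ (Fin d) × ℝ |
        ‖(⟪x, w⟫ - y) • x - (⟪p.1, w⟫ - p.2) • p.1‖ ≤ ε} ∩
      {p : EuclideanSpace ℝ (Fin d) × ℝ | ‖p.1‖ < R}) ≤
    ENNReal.ofReal ((2 * d / (d - 1)) *
      ((volume (Metric.ball (0 : EuclideanSpace ℝ (Fin d)) R)).toReal / R) * ε) := by
  have hdim : 1 < finrank ℝ (EuclideanSpace ℝ (Fin d)) := by simpa using hd
  have : Nontrivial (EuclideanSpace ℝ (Fin d)) := nontrivial_of_finrank_pos (R := ℝ) (by omega)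
  have hd_sub_one : (0 : ℝ) < d - 1 := by
    have : (2 : ℝ) ≤ d := by exact_mod_cast hd
    linarith
  calc volume (forgingSet ((⟪x, w⟫ - y) • x) w ε ∩ {p | ‖p.1‖ < R})
      ≤ ENNReal.ofReal (2 * ε) *
          ∫⁻ z in ball (0 : EuclideanSpace ℝ (Fin d)) R, ENNReal.ofReal ‖z‖⁻¹ := by
        rw [Measure.volume_eq_prod]
        exact prod_forgingSet_inter_le volume _ w ε R
    _ = _ := by
        rw [lintegral_ball_inv_norm volume hdim hR, finrank_euclideanSpace_fin,
          ← ENNReal.ofReal_mul' (mul_nonneg (div_nonneg d.cast_nonneg (mul_pos hd_sub_one hR).le)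
            measureReal_nonneg), measureReal_def]
        congr 1
        field_simp

/-- Volume bound for the ε-forging set of linear regression: with `d > 1`, `R > 0`,
fixed `w` and reference point `(x,y)` with nonzero gradient, the ε-forging set
`S_ε = {(z,t) : ‖(xᵀw - y)x - (zᵀw - t)z‖ ≤ ε}` restricted to `‖z‖ < R` satisfies
`μ(S_ε ∩ B_R) ≤ (2d/(d-1))·(vol(B_R)/R)·ε`. -/
theorem stmt8 {d : ℕ} (hd : 1 < d) (R ε : ℝ) (hR : 0 < R) (hε : 0 ≤ ε)
    (w x : EuclideanSpace ℝ (Fin d)) (y : ℝ)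
    (hgrad : (⟪x, w⟫ - y) • x ≠ 0) :
    volume ({p : EuclideanSpace ℝ (Fin d) × ℝ |
        ‖(⟪x, w⟫ - y) • x - (⟪p.1, w⟫ - p.2) • p.1‖ ≤ ε} ∩
      {p : EuclideanSpace ℝ (Fin d) × ℝ | ‖p.1‖ < R}) ≤
    ENNReal.ofReal ((2 * d / (d - 1)) *
      ((volume (Metric.ball (0 : EuclideanSpace ℝ (Fin d)) R)).toReal / R) * ε) :=
  stmt8_general hd R ε hR w x y
end
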